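/- arXiv:1401.4040 — 5 statements merged into one kernel-verified Lean document; each statement's English description precedes it below -/
import Mathlib

section
/- Let 0 < s < 1, x ≥ 0, y > 0 with z ≤ s(x+y), and let T be the unique nonnegative solution of x(1-e^{-T}) + yT = z. Then T ≤ ln(1/(1-s)). -/
theorem T_le_log (s x y z T : ℝ) (hs0 : 0 < s) (hs1 : s < 1)
    (hx : 0 ≤ x) (hy : 0 < y) (hz : 0 ≤ z) (hzs : z ≤ s * (x + y))
    (hT : 0 ≤ T) (heq : x * (1 - Real.exp (-T)) + y * T = z) :
    T ≤ Real.log (1 / (1 - s)) := by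
  set L := Real.log (1 / (1 - s)) with hL
  have h1s : 0 < 1 - s := by linarith
  have hexpL : Real.exp (-L) = 1 - s := by
    rw [hL, one_div, Real.log_inv, neg_neg, Real.exp_log h1s]
  have hLs : s ≤ L := by
    have h := Real.add_one_le_exp (-s)
    have : 1 - s ≤ Real.exp (-s) := by linarith
    have := Real.log_le_log h1s this
    rw [Real.log_exp] at this
    rw [hL, one_div, Real.log_inv]
    linarith
  by_contra h
  push_neg at h
  have hexp : Real.exp (-T) < Real.exp (-L) := Real.exp_lt_exp.mpr (by linarith)
  have h1 : x * s ≤ x * (1 - Real.exp (-T)) := by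
    apply mul_le_mul_of_nonneg_left _ hx
    rw [hexpL] at hexp
    linarith
  have h2 : y * L < y * T := by exact mul_lt_mul_of_pos_left h hy
  have h3 : y * s ≤ y * L := mul_le_mul_of_nonneg_left hLs hy.le
  nlinarith
end

section
/- The function u(x,y,z) = exp(-T(x,y,z)), where T(x,y,z) is the unique nonnegative solution of x(1-e^{-T}) + yT = z, satisfies the first-order PDE u + x·∂_x u + (x+y)·∂_z u = 0 at every interior point with x > 0, y > 0, z > 0, and satisfies u(x,y,0) = 1. -/
/-!
For `x ≥ 0, y > 0` the map `F x y t = x (1 - e^{-t}) + y t` is strictly increasing, so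
`T x y ·` is its inverse. For fixed `y, z > 0` the root `t` lies in `(0, z / y)` and determines
`x = Φ y z t = (z - y t) / (1 - e^{-t})`, which is strictly decreasing there, so `T · y z` is the
inverse of `Φ y z`. A function with a left inverse that is strictly monotone on a neighbourhood of
its values is continuous, so the one-dimensional inverse function theorem gives
`∂_z T = 1 / (x e^{-T} + y)` and `∂_x T = -(1 - e^{-T}) / (x e^{-T} + y)`,
so `x ∂_x T + (x + y) ∂_z T = 1`, which is the equation for `u = e^{-T}`.
-/

open Real Filter Topology Set

section LeftInverse

variable {α β : Type*} [LinearOrder α] [TopologicalSpace α] [OrderTopology α] [DenselyOrdered α]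
  [LinearOrder β] [TopologicalSpace β] [OrderTopology β]
  {f : α → β} {g : β → α} {s : Set α} {a : β}

theorem StrictMonoOn.eventually_lt_of_leftInverse (hf : StrictMonoOn f s) (hs : s ∈ 𝓝 (g a))
    (hgs : ∀ᶠ b in 𝓝 a, g b ∈ s) (hfg : ∀ᶠ b in 𝓝 a, f (g b) = b) {l : α} (hl : l < g a) :
    ∀ᶠ b in 𝓝 a, l < g b := by
  obtain ⟨l', hl', hl's⟩ := exists_Ioc_subset_of_mem_nhds' hs hl
  obtain ⟨m, hm⟩ := exists_between hl'.2
  have hms : m ∈ s := hl's ⟨hm.1, hm.2.le⟩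
  have hfm : f m < a := hfg.self_of_nhds ▸ hf hms (mem_of_mem_nhds hs) hm.2
  filter_upwards [hgs, hfg, eventually_gt_nhds hfm] with b hbs hfb hmb
  exact hl'.1.trans_lt (hm.1.trans ((hf.lt_iff_lt hms hbs).1 (hfb.symm ▸ hmb)))

theorem StrictMonoOn.continuousAt_of_leftInverse (hf : StrictMonoOn f s) (hs : s ∈ 𝓝 (g a))
    (hgs : ∀ᶠ b in 𝓝 a, g b ∈ s) (hfg : ∀ᶠ b in 𝓝 a, f (g b) = b) : ContinuousAt g a :=
  tendsto_order.2 ⟨fun _ => hf.eventually_lt_of_leftInverse hs hgs hfg,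
    fun _ => hf.dual.eventually_lt_of_leftInverse (β := βᵒᵈ) hs hgs hfg⟩

theorem StrictAntiOn.continuousAt_of_leftInverse (hf : StrictAntiOn f s) (hs : s ∈ 𝓝 (g a))
    (hgs : ∀ᶠ b in 𝓝 a, g b ∈ s) (hfg : ∀ᶠ b in 𝓝 a, f (g b) = b) : ContinuousAt g a :=
  hf.dual_right.continuousAt_of_leftInverse (g := g ∘ OrderDual.ofDual) (a := OrderDual.toDual a)
    hs hgs hfg

end LeftInverse

noncomputable def F (x y t : ℝ) : ℝ := x * (1 - exp (-t)) + y * t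

/-- For `0 < t`, `Φ y z t` is the unique `x` with `F x y t = z`. -/
noncomputable def Φ (y z t : ℝ) : ℝ := (z - y * t) / (1 - exp (-t))

variable {x y z t : ℝ}

theorem F_zero : F x y 0 = 0 := by simp [F]

theorem hasDerivAt_F : HasDerivAt (F x y) (x * exp (-t) + y) t := by
  have h := (((hasDerivAt_neg t).exp.const_sub 1).const_mul x).add ((hasDerivAt_id t).const_mul y)
  exact h.congr_deriv (by ring)

theorem strictMono_F (hx : 0 ≤ x) (hy : 0 < y) : StrictMono (F x y) := by
  intro a b hab
  have : exp (-b) < exp (-a) := exp_lt_exp.2 (neg_lt_neg hab)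
  simp only [F]
  nlinarith

theorem mem_Ioo_of_F_eq (hx : 0 < x) (hy : 0 < y) (hz : 0 < z) (ht₀ : 0 ≤ t) (h : F x y t = z) :
    t ∈ Ioo 0 (z / y) := by
  have ht : 0 < t := ht₀.lt_of_ne (by rintro rfl; rw [F_zero] at h; linarith)
  have : exp (-t) < 1 := exp_lt_one_iff.2 (neg_lt_zero.2 ht)
  refine ⟨ht, (lt_div_iff₀ hy).2 ?_⟩
  simp only [F] at h
  nlinarith

theorem Φ_eq_of_F_eq (ht : 0 < t) (h : F x y t = z) : Φ y z t = x := by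
  have : exp (-t) < 1 := exp_lt_one_iff.2 (neg_lt_zero.2 ht)
  rw [Φ, div_eq_iff (by linarith), ← h, F]
  ring

theorem strictAntiOn_Φ (hy : 0 < y) : StrictAntiOn (Φ y z) (Ioo 0 (z / y)) := by
  rintro a ⟨ha, -⟩ b ⟨-, hbz⟩ hab
  have hb : y * b < z := by rwa [lt_div_iff₀' hy] at hbz
  have hea : exp (-a) < 1 := exp_lt_one_iff.2 (by linarith)
  have heab : exp (-b) < exp (-a) := exp_lt_exp.2 (by linarith)
  rw [Φ, Φ, div_lt_div_iff₀ (by linarith) (by linarith)]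
  nlinarith [mul_pos (sub_pos.2 hb) (sub_pos.2 heab),
    mul_pos (mul_pos hy (sub_pos.2 hab)) (sub_pos.2 hea)]

theorem hasDerivAt_Φ (ht : 0 < t) (h : F x y t = z) :
    HasDerivAt (Φ y z) (-(x * exp (-t) + y) / (1 - exp (-t))) t := by
  have he : 1 - exp (-t) ≠ 0 := (sub_pos.2 (exp_lt_one_iff.2 (neg_lt_zero.2 ht))).ne'
  have h' :=
    (((hasDerivAt_id t).const_mul y).const_sub z).div ((hasDerivAt_neg t).exp.const_sub 1) he
  refine h'.congr_deriv ?_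
  subst h
  simp only [F, id]
  field_simp
  ring

theorem hasDerivAt_root_of_rhs {τ : ℝ → ℝ} (hx : 0 ≤ x) (hy : 0 < y) (hz : 0 < z)
    (hτ : ∀ z', 0 < z' → F x y (τ z') = z') : HasDerivAt τ (x * exp (-τ z) + y)⁻¹ z := by
  have hFτ : ∀ᶠ z' in 𝓝 z, F x y (τ z') = z' := (eventually_gt_nhds hz).mono hτ
  have hτc : ContinuousAt τ z :=
    ((strictMono_F hx hy).strictMonoOn univ).continuousAt_of_leftInverse univ_mem
      (by simp) hFτ
  exact hasDerivAt_F.of_local_left_inverse hτc (by positivity) hFτ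

theorem hasDerivAt_root_of_coeff {τ : ℝ → ℝ} (hx : 0 < x) (hy : 0 < y) (hz : 0 < z)
    (hτ : ∀ x', 0 < x' → 0 ≤ τ x' ∧ F x' y (τ x') = z) :
    HasDerivAt τ (-(1 - exp (-τ x)) / (x * exp (-τ x) + y)) x := by
  have hmem : ∀ x', 0 < x' → τ x' ∈ Ioo 0 (z / y) := fun x' hx' =>
    mem_Ioo_of_F_eq hx' hy hz (hτ x' hx').1 (hτ x' hx').2
  have hΦτ : ∀ᶠ x' in 𝓝 x, Φ y z (τ x') = x' := (eventually_gt_nhds hx).mono fun x' hx' =>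
    Φ_eq_of_F_eq (hmem x' hx').1 (hτ x' hx').2
  have hτc : ContinuousAt τ x :=
    (strictAntiOn_Φ hy).continuousAt_of_leftInverse (isOpen_Ioo.mem_nhds (hmem x hx))
      ((eventually_gt_nhds hx).mono hmem) hΦτ
  have ht := (hmem x hx).1
  have he : 0 < 1 - exp (-τ x) := sub_pos.2 (exp_lt_one_iff.2 (neg_lt_zero.2 ht))
  have hΦ' := hasDerivAt_Φ ht (hτ x hx).2
  have hΦ'0 : -(x * exp (-τ x) + y) / (1 - exp (-τ x)) ≠ 0 := by
    have : 0 < x * exp (-τ x) + y := by positivity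
    exact div_ne_zero (by linarith) he.ne'
  exact (hΦ'.of_local_left_inverse hτc hΦ'0 hΦτ).congr_deriv (by rw [inv_div, div_neg, neg_div])

theorem u_satisfies_pde (T : ℝ → ℝ → ℝ → ℝ)
    (hT : ∀ x y z : ℝ, 0 ≤ x → 0 < y → 0 ≤ z →
      0 ≤ T x y z ∧ x * (1 - Real.exp (-(T x y z))) + y * T x y z = z) :
    (∀ x y : ℝ, 0 ≤ x → 0 < y → Real.exp (-(T x y 0)) = 1) ∧
    (∀ x y z : ℝ, 0 < x → 0 < y → 0 < z →
      ∃ ux uz : ℝ,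
        HasDerivAt (fun x' => Real.exp (-(T x' y z))) ux x ∧
        HasDerivAt (fun z' => Real.exp (-(T x y z'))) uz z ∧
        Real.exp (-(T x y z)) + x * ux + (x + y) * uz = 0) := by
  refine ⟨fun x y hx hy => ?_, fun x y z hx hy hz => ?_⟩
  · have h0 : T x y 0 = 0 :=
      (strictMono_F hx hy).injective ((hT x y 0 hx hy le_rfl).2.trans F_zero.symm)
    simp [h0]
  · have hTx := hasDerivAt_root_of_coeff hx hy hz fun x' hx' => hT x' y z hx'.le hy hz.le
    have hTz := hasDerivAt_root_of_rhs hx.le hy hz fun z' hz' => (hT x y z' hx.le hy hz'.le).2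
    refine ⟨_, _, hTx.neg.exp, hTz.neg.exp, ?_⟩
    simp only [Pi.neg_apply]
    have : 0 < x * exp (-T x y z) + y := by positivity
    field_simp
    ring
end

section
/- Fix s > 0 and let v_s(x) = 1 - e^{-T(x)} where T(x) is the unique nonnegative solution of x(1-e^{-T}) + (1-x)T = s. Then for all x ∈ [0,1), 1 - e^{-s} ≤ v_s(x) ≤ min(s,1), and moreover v_s(x) < min(s,1) when x < 1. -/
theorem vs_bounds (s x T : ℝ) (hs : 0 < s) (hx0 : 0 ≤ x) (hx1 : x < 1)
    (hT : 0 ≤ T) (heq : x * (1 - Real.exp (-T)) + (1 - x) * T = s) :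
    1 - Real.exp (-s) ≤ 1 - Real.exp (-T) ∧
    1 - Real.exp (-T) ≤ min s 1 ∧
    1 - Real.exp (-T) < min s 1 := by
  have hTpos : 0 < T := by
    rcases hT.lt_or_eq with h | h
    · exact h
    · exfalso; rw [← h] at heq; simp [Real.exp_zero] at heq; linarith
  have h1 : 1 - Real.exp (-T) < T := by
    have := Real.add_one_lt_exp (x := -T) (by linarith)
    linarith
  have hle : 1 - Real.exp (-T) ≤ T := h1.le
  have hsT : s ≤ T := by nlinarith [hx1, hx0]
  have h2 : Real.exp (-T) ≤ Real.exp (-s) := Real.exp_le_exp.mpr (by linarith)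
  have hlt1 : 1 - Real.exp (-T) < 1 := by
    have := Real.exp_pos (-T); linarith
  have hlts : 1 - Real.exp (-T) < s := by nlinarith
  refine ⟨by linarith, le_min hlts.le hlt1.le, lt_min hlts hlt1⟩
end

section
/- Fix 0 < s < 1 and let v_s be defined implicitly on [0,1) by x·v_s(x) - (1-x)·log(1 - v_s(x)) = s with v_s(x) ∈ (0, s). Then for all x ∈ [0,1), (1-s)(e^{-s} + s - 1) ≤ v_s'(x) ≤ e^{-s}(-s - log(1-s))/(1-s). -/
lemma sub_log_anti' {a b : ℝ} (ha : 0 < a) (hab : a ≤ b) (hb : b ≤ 1) :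
    b - Real.log b ≤ a - Real.log a := by
  have hb0 : 0 < b := lt_of_lt_of_le ha hab
  have h := Real.log_le_sub_one_of_pos (show (0:ℝ) < a / b by positivity)
  rw [Real.log_div (ne_of_gt ha) (ne_of_gt hb0)] at h
  have h2 : a / b - 1 = (a - b) / b := by field_simp
  rw [h2, le_div_iff₀ hb0] at h
  have hlog : Real.log a ≤ Real.log b := Real.log_le_log ha hab
  nlinarith [mul_nonneg (sub_nonneg.2 hlog) (sub_nonneg.2 hb)]

theorem vs_deriv_bounds (s : ℝ) (hs0 : 0 < s) (hs1 : s < 1) (v : ℝ → ℝ)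
    (hv : ∀ x ∈ Set.Ico (0 : ℝ) 1,
      0 < v x ∧ v x < s ∧ x * v x - (1 - x) * Real.log (1 - v x) = s)
    (hv' : ∀ x ∈ Set.Ico (0 : ℝ) 1,
      HasDerivAt v (((1 - v x) / (1 - x * v x)) * ((s - v x) / (1 - x))) x) :
    ∀ x ∈ Set.Ico (0 : ℝ) 1,
      (1 - s) * (Real.exp (-s) + s - 1) ≤ deriv v x ∧
      deriv v x ≤ Real.exp (-s) * (-s - Real.log (1 - s)) / (1 - s) := by
  intro x hx
  obtain ⟨hx0, hx1⟩ := hx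
  obtain ⟨hv0, hvs, heq⟩ := hv x ⟨hx0, hx1⟩
  have hd := (hv' x ⟨hx0, hx1⟩).deriv
  rw [hd]
  set w := v x with hw
  have hw1 : w < 1 := hvs.trans hs1
  have ht0 : (0:ℝ) < 1 - w := by linarith
  -- log (1 - w) ≤ -s
  have hle : Real.log (1 - w) ≤ (1 - w) - 1 := Real.log_le_sub_one_of_pos ht0
  have hlog : Real.log (1 - w) ≤ -s := by
    nlinarith [mul_nonneg hx0 (show (0:ℝ) ≤ -Real.log (1 - w) - w by linarith)]
  -- key identity
  have hkey : s - w = (1 - x) * (-w - Real.log (1 - w)) := by linear_combination -heq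
  have hx1' : (0:ℝ) < 1 - x := by linarith
  have hg : (s - w) / (1 - x) = -w - Real.log (1 - w) := by
    rw [hkey]; field_simp
  rw [hg]
  set g := -w - Real.log (1 - w) with hgdef
  have hes1 : Real.exp (-s) ≤ 1 := by
    rw [show (1:ℝ) = Real.exp 0 by simp]
    exact Real.exp_le_exp.mpr (by linarith)
  have hts : 1 - w ≤ Real.exp (-s) := by
    calc 1 - w = Real.exp (Real.log (1 - w)) := (Real.exp_log ht0).symm
    _ ≤ Real.exp (-s) := Real.exp_le_exp.mpr hlog
  have hglb : Real.exp (-s) + s - 1 ≤ g := by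
    have := sub_log_anti' ht0 hts hes1
    rw [Real.log_exp] at this
    simp only [hgdef]; linarith
  have hgub : g ≤ -s - Real.log (1 - s) := by
    have := sub_log_anti' (show (0:ℝ) < 1 - s by linarith)
      (show 1 - s ≤ 1 - w by linarith) (by linarith)
    simp only [hgdef]; linarith
  have hexp : 1 - s ≤ Real.exp (-s) := by
    have := Real.add_one_le_exp (-s); linarith
  have hg0 : 0 ≤ g := by linarith
  have hK0 : 0 ≤ -s - Real.log (1 - s) := by linarith
  have hxw : 1 - w ≤ 1 - x * w := by nlinarith
  have hxwpos : (0:ℝ) < 1 - x * w := lt_of_lt_of_le ht0 hxw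
  have hxw1 : 1 - x * w ≤ 1 := by nlinarith
  constructor
  · rw [div_mul_eq_mul_div, le_div_iff₀ hxwpos]
    nlinarith [mul_nonneg (show (0:ℝ) ≤ 1 - s by linarith)
        (show (0:ℝ) ≤ Real.exp (-s) + s - 1 by linarith),
      mul_le_mul (show 1 - s ≤ 1 - w by linarith) hglb
        (by linarith) (by linarith)]
  · have h1 : (1 - w) / (1 - x * w) * g ≤ g := by
      rw [div_mul_eq_mul_div, div_le_iff₀ hxwpos]
      nlinarith
    have h2 : -s - Real.log (1 - s) ≤ Real.exp (-s) * (-s - Real.log (1 - s)) / (1 - s) := by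
      rw [le_div_iff₀ (show (0:ℝ) < 1 - s by linarith)]
      nlinarith
    linarith
end

section
/- For all s ∈ (0,1) and all v ∈ [1-e^{-s}, s], the quantity 3v - 2v² - s - s(1-s) is nonnegative; in particular 3v - 2xv² - s ≥ s(1-s) whenever x ∈ [0,1] and v ∈ [1-e^{-s}, s]. -/
theorem key_inequality (s v : ℝ) (hs0 : 0 < s) (hs1 : s < 1)
    (hv0 : 1 - Real.exp (-s) ≤ v) (hv1 : v ≤ s) :
    0 ≤ 3 * v - 2 * v ^ 2 - s - s * (1 - s) ∧
    ∀ x ∈ Set.Icc (0 : ℝ) 1, s * (1 - s) ≤ 3 * v - 2 * x * v ^ 2 - s := by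
  have hE : 1 + s + s ^ 2 / 2 ≤ Real.exp s := Real.quadratic_le_exp_of_nonneg hs0.le
  have hEpos : (0:ℝ) < 1 + s + s ^ 2 / 2 := by positivity
  have h2 : (0:ℝ) ≤ 1 - s + s ^ 2 / 2 := by nlinarith [sq_nonneg s]
  have hexp : Real.exp (-s) ≤ 1 - s + s ^ 2 / 2 := by
    rw [Real.exp_neg, inv_le_iff_one_le_mul₀ (lt_of_lt_of_le hEpos hE)]
    calc (1:ℝ) ≤ (1 - s + s ^ 2 / 2) * (1 + s + s ^ 2 / 2) := by
            nlinarith [sq_nonneg s, sq_nonneg (s^2)]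
      _ ≤ (1 - s + s ^ 2 / 2) * Real.exp s := by
            exact mul_le_mul_of_nonneg_left hE h2
  have hv2 : s - s ^ 2 / 2 ≤ v := by linarith
  have hfa : 0 ≤ s - 5 * s ^ 2 / 2 + 2 * s ^ 3 - s ^ 4 / 2 := by
    have : s - 5 * s ^ 2 / 2 + 2 * s ^ 3 - s ^ 4 / 2
        = s * (1 - s) ^ 2 * (1 - s / 2) := by ring
    rw [this]
    have h3 : (0:ℝ) ≤ 1 - s / 2 := by linarith
    positivity
  have hfb : 0 ≤ s * (1 - s) := mul_nonneg hs0.le (by linarith)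
  have h1 : 0 ≤ 3 * v - 2 * v ^ 2 - s - s * (1 - s) := by
    nlinarith [mul_nonneg (sub_nonneg.2 hv1) hfa,
      mul_nonneg (sub_nonneg.2 hv2) hfb,
      mul_nonneg (mul_nonneg hs0.le hs0.le)
        (mul_nonneg (sub_nonneg.2 hv2) (sub_nonneg.2 hv1)),
      mul_pos hs0 hs0]
  refine ⟨h1, fun x hx => ?_⟩
  obtain ⟨hx0, hx1⟩ := hx
  nlinarith [mul_nonneg (sub_nonneg.2 hx1) (sq_nonneg v)]
end
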